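/- Let s₆ ≈ 2.154 be the unique root in the interval (2,3) of s⁴ − 3s³ + 3s² − 3s + 1 = 0, and let s₇ ≈ 2.247 be the unique root in the interval (2,3) of s³ − 2s² − s + 1 = 0. Fix a real s with s₆ ≤ s ≤ s₇ and consider the instance of the favorite-machine scheduling game on two machines with parameter s consisting of three jobs: A of size s/(2s − 1) with favorite machine 2; D of size (s − 1)²/(2s − 1) with favorite machine 2; and E of size (s − 1)/(2s − 1) with favorite machine 2. Then the allocation assigning A to machine 1 and D, E to machine 2 is a strong equilibrium whose makespan equals s²/(2s − 1), while the optimal makespan of this instance is at most 1. Consequently, the strong price of anarchy at parameter s is at least s²/(2s − 1). -/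

import Mathlib

open Finset

/-- Processing time of job `j` on machine `i` in the favorite-machine model:
`q j` on the favorite machine `f j` and `s * q j` on the other machine. -/
noncomputable def ptime (s : ℝ) {n : ℕ} (q : Fin n → ℝ) (f : Fin n → Fin 2)
    (i : Fin 2) (j : Fin n) : ℝ :=
  if f j = i then q j else s * q j

/-- Load of machine `i` under allocation `x`. -/
noncomputable def load (s : ℝ) {n : ℕ} (q : Fin n → ℝ) (f : Fin n → Fin 2)
    (x : Fin n → Fin 2) (i : Fin 2) : ℝ :=
  ∑ j ∈ Finset.univ.filter (fun j => x j = i), ptime s q f i j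

/-- Makespan (maximum load) of allocation `x`. -/
noncomputable def makespan (s : ℝ) {n : ℕ} (q : Fin n → ℝ) (f : Fin n → Fin 2)
    (x : Fin n → Fin 2) : ℝ :=
  max (load s q f x 0) (load s q f x 1)

/-- The optimal (minimum) makespan over all allocations. -/
noncomputable def optMakespan (s : ℝ) {n : ℕ} (q : Fin n → ℝ) (f : Fin n → Fin 2) : ℝ :=
  ⨅ y : Fin n → Fin 2, makespan s q f y

/-- Pure Nash equilibrium: no job can move to the other machine and find there
a load smaller than its current cost. -/
def IsNE (s : ℝ) {n : ℕ} (q : Fin n → ℝ) (f : Fin n → Fin 2)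
    (x : Fin n → Fin 2) : Prop :=
  ∀ j : Fin n, ∀ i : Fin 2, i ≠ x j →
    load s q f x (x j) ≤ load s q f (Function.update x j i) i

/-- Strong equilibrium: for every deviation `y` differing from `x` on a nonempty
set of jobs, some deviating job does not improve its cost. -/
def IsSE (s : ℝ) {n : ℕ} (q : Fin n → ℝ) (f : Fin n → Fin 2)
    (x : Fin n → Fin 2) : Prop :=
  ∀ y : Fin n → Fin 2, (∃ j, y j ≠ x j) →
    ∃ j, y j ≠ x j ∧ load s q f x (x j) ≤ load s q f y (y j)

/-!
Job E gains nothing by moving alone, since `s * q_E` is exactly its cost `s(s-1)/(2s-1)` under `x`,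
and job D cannot gain either, since `s * q_D ≥ s(s-1)/(2s-1)` once `s ≥ 2`; so a coalition improving
on `x` must be A alone, and A moving to its favorite machine meets the load
`q_A + q_D + q_E = s²/(2s-1)`, its current cost. The optimum is at most `1`: put D on machine 1 and
A, E on machine 2; machine 2 then has load exactly `1`, and machine 1 has load
`s(s-1)²/(2s-1) ≤ 1`, which is `s³ - 2s² - s + 1 ≤ 0`, true on `[2, s₇]`.
-/

section General

variable {s : ℝ} {n : ℕ} {q : Fin n → ℝ} {f : Fin n → Fin 2}

lemma load_eq_sum_ite (x : Fin n → Fin 2) (i : Fin 2) :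
    load s q f x i = ∑ j, if x j = i then ptime s q f i j else 0 :=
  Finset.sum_filter _ _

lemma ptime_nonneg (hs : 0 ≤ s) (hq : ∀ j, 0 ≤ q j) (i : Fin 2) (j : Fin n) :
    0 ≤ ptime s q f i j := by
  unfold ptime
  split_ifs
  exacts [hq j, mul_nonneg hs (hq j)]

lemma ptime_le_load (hs : 0 ≤ s) (hq : ∀ j, 0 ≤ q j) (y : Fin n → Fin 2) (j : Fin n) :
    ptime s q f (y j) j ≤ load s q f y (y j) :=
  Finset.single_le_sum (fun k _ => ptime_nonneg hs hq (y j) k)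
    (Finset.mem_filter.mpr ⟨Finset.mem_univ j, rfl⟩)

lemma optMakespan_le_makespan (y : Fin n → Fin 2) : optMakespan s q f ≤ makespan s q f y :=
  ciInf_le (Set.finite_range _).bddBelow y

/-- Jobs other than `j₀` cannot gain even alone on the other machine, so the only candidate
improving coalition is `{j₀}`. -/
lemma isSE_of_unilateral (hs : 0 ≤ s) (hq : ∀ j, 0 ≤ q j) {x : Fin n → Fin 2} (j₀ : Fin n)
    (hstay : ∀ j ≠ j₀, ∀ i ≠ x j, load s q f x (x j) ≤ ptime s q f i j)
    (hj₀ : ∀ i ≠ x j₀, load s q f x (x j₀) ≤ load s q f (Function.update x j₀ i) i) :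
    IsSE s q f x := by
  intro y ⟨j, hj⟩
  by_cases hothers : ∃ k ≠ j₀, y k ≠ x k
  · obtain ⟨k, hk, hyk⟩ := hothers
    exact ⟨k, hyk, (hstay k hk (y k) hyk).trans (ptime_le_load hs hq y k)⟩
  · push Not at hothers
    have hj : j = j₀ := by_contra fun h => hj (hothers j h)
    subst hj
    have hy : y = Function.update x j (y j) := by
      ext k : 1
      by_cases hk : k = j
      · subst hk; simp
      · simp [hk, hothers k hk]
    refine ⟨j, hj, ?_⟩
    rw [hy, Function.update_self]
    exact hj₀ _ hj

end General

/-- The jobs `0, 1, 2` are the jobs A, D, E; the paper's machines 1, 2 are `0, 1 : Fin 2`. -/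
noncomputable def jobSize (s : ℝ) : Fin 3 → ℝ :=
  ![s/(2*s - 1), (s - 1)^2/(2*s - 1), (s - 1)/(2*s - 1)]

def jobFavorite : Fin 3 → Fin 2 := ![1, 1, 1]

def equilibriumAlloc : Fin 3 → Fin 2 := ![0, 1, 1]

def optimalAlloc : Fin 3 → Fin 2 := ![1, 0, 1]

section Instance

variable {s : ℝ}

lemma jobSize_nonneg (hs : 1 ≤ s) (j : Fin 3) : 0 ≤ jobSize s j := by
  fin_cases j <;> simp only [jobSize, Fin.reduceFinMk, Matrix.cons_val] <;> apply div_nonneg <;>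
    nlinarith

lemma load_equilibriumAlloc_zero :
    load s (jobSize s) jobFavorite equilibriumAlloc 0 = s^2/(2*s - 1) := by
  simp only [jobSize, jobFavorite, Fin.isValue, equilibriumAlloc, load_eq_sum_ite, ptime,
    Fin.sum_univ_three, Matrix.cons_val_zero, ↓reduceIte, one_ne_zero, Matrix.cons_val_one,
    add_zero, Matrix.cons_val]
  ring

lemma load_equilibriumAlloc_one :
    load s (jobSize s) jobFavorite equilibriumAlloc 1 = s*(s - 1)/(2*s - 1) := by
  simp only [jobSize, jobFavorite, Fin.isValue, equilibriumAlloc, load_eq_sum_ite, ptime,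
    Fin.sum_univ_three, Matrix.cons_val_zero, zero_ne_one, ↓reduceIte, Matrix.cons_val_one,
    zero_add, Matrix.cons_val]
  ring

lemma load_update_equilibriumAlloc :
    load s (jobSize s) jobFavorite (Function.update equilibriumAlloc 0 1) 1 = s^2/(2*s - 1) := by
  simp only [jobSize, jobFavorite, Fin.isValue, equilibriumAlloc, load_eq_sum_ite, ptime,
    Fin.sum_univ_three, Function.update_self, ↓reduceIte, Matrix.cons_val_zero, ne_eq, one_ne_zero,
    not_false_eq_true, Function.update_of_ne, Matrix.cons_val_one, Fin.reduceEq, Matrix.cons_val]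
  ring

lemma makespan_equilibriumAlloc (hs : 1 ≤ s) :
    makespan s (jobSize s) jobFavorite equilibriumAlloc = s^2/(2*s - 1) := by
  rw [makespan, load_equilibriumAlloc_zero, load_equilibriumAlloc_one, max_eq_left]
  gcongr <;> linarith

lemma isSE_equilibriumAlloc (hs : 2 ≤ s) : IsSE s (jobSize s) jobFavorite equilibriumAlloc := by
  have hd : 0 < 2*s - 1 := by linarith
  refine isSE_of_unilateral (by linarith) (jobSize_nonneg (by linarith)) 0 ?_ ?_
  · intro j hj i hi
    have hxj : equilibriumAlloc j = 1 := by fin_cases j <;> simp_all [equilibriumAlloc]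
    obtain rfl : i = 0 := by omega
    rw [hxj, load_equilibriumAlloc_one]
    obtain rfl | rfl : j = 1 ∨ j = 2 := by omega
    · simp only [ptime, jobFavorite, Fin.isValue, Matrix.cons_val_one, Matrix.cons_val_zero,
        one_ne_zero, ↓reduceIte, jobSize, mul_div_assoc']
      gcongr
      nlinarith
    · simp [ptime, jobSize, jobFavorite, mul_div_assoc']
  · intro i hi
    obtain rfl : i = 1 := by fin_cases i <;> simp_all [equilibriumAlloc]
    rw [show equilibriumAlloc 0 = 0 from rfl, load_equilibriumAlloc_zero,
      load_update_equilibriumAlloc]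

lemma load_optimalAlloc_zero :
    load s (jobSize s) jobFavorite optimalAlloc 0 = s*(s - 1)^2/(2*s - 1) := by
  simp only [jobSize, jobFavorite, Fin.isValue, optimalAlloc, load_eq_sum_ite, ptime,
    Fin.sum_univ_three, Matrix.cons_val_zero, one_ne_zero, ↓reduceIte, Matrix.cons_val_one,
    zero_add, Matrix.cons_val, add_zero]
  ring

lemma load_optimalAlloc_one :
    load s (jobSize s) jobFavorite optimalAlloc 1 = (s + (s - 1))/(2*s - 1) := by
  simp only [jobSize, jobFavorite, Fin.isValue, optimalAlloc, load_eq_sum_ite, ptime,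
    Fin.sum_univ_three, Matrix.cons_val_zero, ↓reduceIte, Matrix.cons_val_one, zero_ne_one,
    add_zero, Matrix.cons_val]
  ring

lemma makespan_optimalAlloc_le_one (hs : 1 < s) (hcubic : s^3 - 2*s^2 - s + 1 ≤ 0) :
    makespan s (jobSize s) jobFavorite optimalAlloc ≤ 1 := by
  have hd : 0 < 2*s - 1 := by linarith
  rw [makespan, load_optimalAlloc_zero, load_optimalAlloc_one]
  exact max_le ((div_le_one hd).mpr (by nlinarith)) ((div_le_one hd).mpr (by linarith))

end Instance

/-- The cubic `t³ - 2t² - t + 1` is increasing on `[2, ∞)`. -/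
lemma cubic_nonpos_of_le_root {s t : ℝ} (hs : 2 ≤ s) (hst : s ≤ t)
    (ht : t^3 - 2*t^2 - t + 1 = 0) : s^3 - 2*s^2 - s + 1 ≤ 0 := by
  have hfactor : 0 ≤ t*(t - 2) + s*(s - 2) + (s*t - 1) := by nlinarith
  nlinarith [mul_nonneg (sub_nonneg.mpr hst) hfactor]

theorem spoa_lower_interval7_general
    (s₆ : ℝ) (hs₆lo : 2 < s₆)
    (s₇ : ℝ)
    (hs₇root : s₇^3 - 2*s₇^2 - s₇ + 1 = 0)
    (s : ℝ) (hs : s₆ ≤ s) (hs' : s ≤ s₇)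
    (q : Fin 3 → ℝ) (hq : q = ![s/(2*s - 1), (s - 1)^2/(2*s - 1), (s - 1)/(2*s - 1)])
    (f : Fin 3 → Fin 2) (hf : f = ![1, 1, 1])
    (x : Fin 3 → Fin 2) (hx : x = ![0, 1, 1]) :
    IsSE s q f x ∧
      makespan s q f x = s^2/(2*s - 1) ∧
      optMakespan s q f ≤ 1 ∧
      (s^2/(2*s - 1)) * optMakespan s q f ≤ makespan s q f x := by
  obtain rfl : q = jobSize s := hq
  obtain rfl : f = jobFavorite := hf
  obtain rfl : x = equilibriumAlloc := hx
  have hs2 : 2 ≤ s := by linarith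
  have hopt : optMakespan s (jobSize s) jobFavorite ≤ 1 :=
    (optMakespan_le_makespan optimalAlloc).trans
      (makespan_optimalAlloc_le_one (by linarith) (cubic_nonpos_of_le_root hs2 hs' hs₇root))
  have hmakespan := makespan_equilibriumAlloc (by linarith : 1 ≤ s)
  refine ⟨isSE_equilibriumAlloc hs2, hmakespan, hopt, ?_⟩
  rw [hmakespan]
  exact mul_le_of_le_one_right (div_nonneg (sq_nonneg s) (by linarith)) hopt

theorem spoa_lower_interval7
    (s₆ : ℝ) (hs₆lo : 2 < s₆) (hs₆hi : s₆ < 3)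
    (hs₆root : s₆^4 - 3*s₆^3 + 3*s₆^2 - 3*s₆ + 1 = 0)
    (s₇ : ℝ) (hs₇lo : 2 < s₇) (hs₇hi : s₇ < 3)
    (hs₇root : s₇^3 - 2*s₇^2 - s₇ + 1 = 0)
    (s : ℝ) (hs : s₆ ≤ s) (hs' : s ≤ s₇)
    (q : Fin 3 → ℝ) (hq : q = ![s/(2*s - 1), (s - 1)^2/(2*s - 1), (s - 1)/(2*s - 1)])
    (f : Fin 3 → Fin 2) (hf : f = ![1, 1, 1])
    (x : Fin 3 → Fin 2) (hx : x = ![0, 1, 1]) :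
    IsSE s q f x ∧
      makespan s q f x = s^2/(2*s - 1) ∧
      optMakespan s q f ≤ 1 ∧
      (s^2/(2*s - 1)) * optMakespan s q f ≤ makespan s q f x :=
  spoa_lower_interval7_general s₆ hs₆lo s₇ hs₇root s hs hs' q hq f hf x hx
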